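/- Let 𝒢 be the set of nondecreasing right-continuous functions g : [0,1) → [0,1] with its Borel σ-algebra (induced by the L²([0,1])-metric), and let Q be a Borel probability measure on 𝒢 such that for every t ∈ (0,1), Q-almost every g is continuous at t. For N ≥ 2 let ℱ^N be the σ-algebra on 𝒢 generated by the evaluation maps g ↦ g(i/N), i = 1, …, N−1. Then for every u ∈ L²(𝒢, Q), the conditional expectations E[u | ℱ^N] converge to u in L²(𝒢, Q) as N → ∞. -/

import Mathlib

/-!
Approximate `u` in `L²(Q)` by a bounded continuous `v`. For `g ∈ 𝒢`, the step function equal to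
`g((k+1)/N)` on `[k/N, (k+1)/N)` converges to `g` on `[0,1)` by right-continuity, hence in `L²`.
Since it depends continuously on the grid values `g(i/N)`, composing `v` with it gives
`ℱ^N`-measurable functions `w_N → v` in `L²(Q)` (bounded convergence). As `E[· | ℱ^N]` is an
`L²`-contraction fixing `w_N`, `‖E[u | ℱ^N] - u‖ ≤ 2 ‖u - w_N‖`.
Measurability of `g ↦ g(t)` for `t ∈ (0,1)` comes from writing `g(t)` as the limit of the averages
of `g` over `(t, t + h]`, which are `L²`-continuous in `g`.
-/

open Set MeasureTheory Filter Topology ENNReal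

noncomputable section

instance : Fact ((1 : ℝ≥0∞) ≤ 2) := ⟨by norm_num⟩

/-- Lebesgue measure on `[0,1)`. -/
def leb01 : Measure ℝ := volume.restrict (Ico (0:ℝ) 1)

/-- `g` is a nondecreasing right-continuous function `[0,1) → [0,1]`. -/
def GProp (g : ℝ → ℝ) : Prop :=
  MonotoneOn g (Ico (0:ℝ) 1) ∧
  (∀ t ∈ Ico (0:ℝ) 1, ContinuousWithinAt g (Ici t) t) ∧
  (∀ t ∈ Ico (0:ℝ) 1, g t ∈ Icc (0:ℝ) 1)

/-- `𝒢`, realized as the subspace of `L²([0,1], dx)` of classes possessing a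
nondecreasing right-continuous `[0,1]`-valued representative; it carries the
`L²`-metric topology. -/
abbrev G : Type := {f : Lp ℝ 2 leb01 // ∃ g : ℝ → ℝ, GProp g ∧ ⇑f =ᵐ[leb01] g}

instance : MeasurableSpace G := borel G

/-- The canonical nondecreasing right-continuous representative of an element of `𝒢`. -/
def rep (f : G) : ℝ → ℝ := f.2.choose

/-- The σ-algebra `ℱ^N` on `𝒢` generated by the evaluations `g ↦ g(i/N)`,
`i = 1, …, N-1`. -/
def FN (N : ℕ) : MeasurableSpace G :=
  MeasurableSpace.comap
    (fun f : G => fun i : Fin (N - 1) => rep f (((i : ℕ) + 1 : ℝ) / N)) inferInstance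

instance : BorelSpace G := ⟨rfl⟩

instance : IsProbabilityMeasure leb01 :=
  ⟨by rw [leb01, Measure.restrict_apply_univ, Real.volume_Ico]; norm_num⟩

lemma gProp_rep (f : G) : GProp (rep f) := f.2.choose_spec.1

lemma coeFn_ae_eq_rep (f : G) : ⇑(f : Lp ℝ 2 leb01) =ᵐ[leb01] rep f := f.2.choose_spec.2

lemma ae_mem_Ico_leb01 : ∀ᵐ x ∂leb01, x ∈ Ico (0 : ℝ) 1 := ae_restrict_mem measurableSet_Ico

lemma setIntegral_Ioc_eq_intervalIntegral_rep (f : G) {a b : ℝ} (ha : 0 ≤ a) (hab : a ≤ b)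
    (hb : b < 1) : ∫ x in Ioc a b, (f : Lp ℝ 2 leb01) x ∂leb01 = ∫ x in a..b, rep f x := by
  have hsub : Ioc a b ⊆ Ico 0 1 := fun x hx => ⟨ha.trans hx.1.le, hx.2.trans_lt hb⟩
  calc ∫ x in Ioc a b, (f : Lp ℝ 2 leb01) x ∂leb01 = ∫ x in Ioc a b, rep f x ∂leb01 :=
        integral_congr_ae (coeFn_ae_eq_rep f).restrict
    _ = ∫ x in Ioc a b, rep f x := by
        rw [leb01, Measure.restrict_restrict measurableSet_Ioc, inter_eq_left.2 hsub]
    _ = ∫ x in a..b, rep f x := (intervalIntegral.integral_of_le hab).symm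

lemma tendsto_mul_intervalIntegral_of_continuousWithinAt {g : ℝ → ℝ} {t : ℝ}
    (hmeas : StronglyMeasurableAtFilter g (𝓝[≥] t)) (hg : ContinuousWithinAt g (Ici t) t) :
    Tendsto (fun n : ℕ => ((n : ℝ) + 1) * ∫ x in t..t + 1 / ((n : ℝ) + 1), g x) atTop
      (𝓝 (g t)) := by
  have hslope := (hasDerivWithinAt_iff_tendsto_slope' (lt_irrefl t : t ∉ Ioi t)).1
    ((intervalIntegral.integral_hasDerivWithinAt_right (s := Ici t) IntervalIntegrable.refl
      (hmeas.filter_mono (nhdsWithin_mono _ Ioi_subset_Ici_self))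
      (hg.mono Ioi_subset_Ici_self)).mono Ioi_subset_Ici_self)
  have hpts : Tendsto (fun n : ℕ => t + 1 / ((n : ℝ) + 1)) atTop (𝓝[>] t) := by
    refine tendsto_nhdsWithin_iff.2 ⟨?_, Eventually.of_forall fun n => ?_⟩
    · simpa using (tendsto_const_nhds (x := t)).add tendsto_one_div_add_atTop_nhds_zero_nat
    · simp only [mem_Ioi, lt_add_iff_pos_right]; positivity
  refine (hslope.comp hpts).congr fun n => ?_
  simp [slope_def_field, mul_comm]

lemma measurable_rep_apply {t : ℝ} (ht : t ∈ Ioo (0 : ℝ) 1) :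
    Measurable fun f : G => rep f t := by
  set ε : ℕ → ℝ := fun n => 1 / ((n : ℝ) + 1)
  have hcont (n : ℕ) : Continuous fun f : G =>
      ((n : ℝ) + 1) * ∫ x in Ioc t (t + ε n), (f : Lp ℝ 2 leb01) x ∂leb01 := by
    have hfin : leb01 (Ioc t (t + ε n)) ≠ ∞ := measure_ne_top _ _
    simp_rw [← L2.inner_indicatorConstLp_one measurableSet_Ioc hfin]
    fun_prop
  refine measurable_of_tendsto_metrizable (fun n => (hcont n).measurable) (tendsto_pi_nhds.2 ?_)
  intro f
  have hIco : Ico (0 : ℝ) 1 ∈ 𝓝[≥] t := mem_nhdsWithin_of_mem_nhds (Ico_mem_nhds ht.1 ht.2)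
  have hmeas : StronglyMeasurableAtFilter (rep f) (𝓝[≥] t) :=
    ⟨_, hIco, ((Lp.aestronglyMeasurable _).congr (coeFn_ae_eq_rep f))⟩
  refine (tendsto_mul_intervalIntegral_of_continuousWithinAt hmeas
    ((gProp_rep f).2.1 t ⟨ht.1.le, ht.2⟩)).congr' ?_
  have hε : Tendsto (fun n => t + ε n) atTop (𝓝 t) := by
    simpa [ε] using (tendsto_const_nhds (x := t)).add tendsto_one_div_add_atTop_nhds_zero_nat
  filter_upwards [hε.eventually (gt_mem_nhds ht.2)] with n hn
  rw [setIntegral_Ioc_eq_intervalIntegral_rep f ht.1.le (le_add_of_nonneg_right (by positivity)) hn]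

section StepFunction

variable {n : ℕ}

/-- Clamping to `[0,1]` and taking running maxima turns every vector, not only the grid values of
an element of `𝒢`, into the values of a function in `𝒢`; this makes `stepG` below continuous on the
whole space. -/
def clampedPartialSup (v : Fin (n + 1) → ℝ) (j : Fin (n + 1)) : ℝ :=
  (Finset.Iic j).sup' Finset.nonempty_Iic fun k => (projIcc (0 : ℝ) 1 zero_le_one (v k) : ℝ)

lemma clampedPartialSup_mem (v : Fin (n + 1) → ℝ) (j : Fin (n + 1)) :
    clampedPartialSup v j ∈ Icc (0 : ℝ) 1 := by
  obtain ⟨k, -, hk⟩ := Finset.exists_mem_eq_sup' Finset.nonempty_Iic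
    fun k => (projIcc (0 : ℝ) 1 zero_le_one (v k) : ℝ)
  rw [clampedPartialSup, hk]
  exact Subtype.prop _

lemma monotone_clampedPartialSup (v : Fin (n + 1) → ℝ) : Monotone (clampedPartialSup v) :=
  fun _ _ h => Finset.sup'_mono _ (Finset.Iic_subset_Iic.2 h) _

lemma abs_clampedPartialSup_sub_le (v w : Fin (n + 1) → ℝ) (j : Fin (n + 1)) :
    |clampedPartialSup v j - clampedPartialSup w j| ≤ dist v w := by
  have key (a b : Fin (n + 1) → ℝ) : clampedPartialSup a j ≤ clampedPartialSup b j + dist a b := by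
    refine Finset.sup'_le _ _ fun k hk => ?_
    have hproj := (abs_sub_le_iff.1
      (abs_projIcc_sub_projIcc (zero_le_one' ℝ) (c := a k) (d := b k))).1
    have hcoord : |a k - b k| ≤ dist a b := by simpa [Real.dist_eq] using dist_le_pi_dist a b k
    have hsup : (projIcc (0 : ℝ) 1 zero_le_one (b k) : ℝ) ≤ clampedPartialSup b j :=
      Finset.le_sup' (fun k => (projIcc (0 : ℝ) 1 zero_le_one (b k) : ℝ)) hk
    linarith
  exact abs_sub_le_iff.2 ⟨by linarith [key v w], by linarith [key w v, dist_comm v w]⟩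

lemma clampedPartialSup_eq_of_monotone {v : Fin (n + 1) → ℝ} (hv : Monotone v)
    (hv01 : ∀ k, v k ∈ Icc (0 : ℝ) 1) (j : Fin (n + 1)) : clampedPartialSup v j = v j := by
  have hproj (k : Fin (n + 1)) : (projIcc (0 : ℝ) 1 zero_le_one (v k) : ℝ) = v k := by
    rw [projIcc_of_mem _ (hv01 k)]
  refine le_antisymm (Finset.sup'_le _ _ fun k hk => ?_) ?_
  · rw [hproj]; exact hv (Finset.mem_Iic.1 hk)
  · have := Finset.le_sup' (fun k => (projIcc (0 : ℝ) 1 zero_le_one (v k) : ℝ))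
      (Finset.mem_Iic.2 (le_refl j))
    rwa [hproj] at this

lemma continuousWithinAt_Ici_comp_natFloor {β : Type*} [TopologicalSpace β] (V : ℕ → β) {c : ℝ}
    (hc : 0 ≤ c) (t : ℝ) : ContinuousWithinAt (fun s => V ⌊s * c⌋₊) (Ici t) t := by
  have hfloor : Tendsto (fun s : ℝ => ⌊s⌋₊) (𝓝[≥] (t * c)) (pure ⌊t * c⌋₊) := by
    simpa only [Function.comp_def, Int.floor_toNat] using
      (tendsto_pure_pure Int.toNat _).comp (tendsto_floor_right_pure_floor (t * c))
  have hmul : Tendsto (· * c) (𝓝[≥] t) (𝓝[≥] (t * c)) :=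
    (continuous_mul_const c).continuousWithinAt.tendsto_nhdsWithin
      fun s hs => mul_le_mul_of_nonneg_right hs hc
  exact ((tendsto_pure_pure V _).comp (hfloor.comp hmul)).mono_right (pure_le_nhds _)

/-- With `N = n + 2`, on `[k/N, (k+1)/N)` this is the `k`-th entry of `clampedPartialSup v`; for
`v = gridValues N g` that is `g ((k+1)/N)`, the value at the right endpoint. -/
def stepFun (v : Fin (n + 1) → ℝ) (t : ℝ) : ℝ :=
  clampedPartialSup v (Fin.clamp ⌊t * (n + 2)⌋₊ n)

lemma stepFun_mem (v : Fin (n + 1) → ℝ) (t : ℝ) : stepFun v t ∈ Icc (0 : ℝ) 1 :=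
  clampedPartialSup_mem v _

lemma monotone_stepFun (v : Fin (n + 1) → ℝ) : Monotone (stepFun v) :=
  (monotone_clampedPartialSup v).comp <| Fin.clamp_monotone.comp <|
    Nat.floor_mono.comp fun _ _ h => mul_le_mul_of_nonneg_right h (by positivity)

lemma memLp_stepFun (v : Fin (n + 1) → ℝ) : MemLp (stepFun v) 2 leb01 :=
  memLp_of_bounded (a := 0) (b := 1) (ae_of_all _ (stepFun_mem v))
    (monotone_stepFun v).measurable.aestronglyMeasurable 2

def stepG (v : Fin (n + 1) → ℝ) : G :=
  ⟨(memLp_stepFun v).toLp _, stepFun v,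
    ⟨(monotone_stepFun v).monotoneOn _,
      fun t _ => continuousWithinAt_Ici_comp_natFloor
        (fun k => clampedPartialSup v (Fin.clamp k n)) (c := (n : ℝ) + 2) (by positivity) t,
      fun t _ => stepFun_mem v t⟩,
    (memLp_stepFun v).coeFn_toLp⟩

lemma coeFn_stepG (v : Fin (n + 1) → ℝ) : ⇑(stepG v : Lp ℝ 2 leb01) =ᵐ[leb01] stepFun v :=
  (memLp_stepFun v).coeFn_toLp

lemma lipschitzWith_stepG : LipschitzWith 1 (stepG (n := n)) := by
  refine LipschitzWith.of_dist_le_mul fun v w => ?_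
  rw [NNReal.coe_one, one_mul, Subtype.dist_eq, dist_eq_norm]
  refine (Lp.norm_le_of_ae_bound (C := dist v w) dist_nonneg ?_).trans_eq
    (by simp [measureUnivNNReal])
  filter_upwards [Lp.coeFn_sub (stepG v : Lp ℝ 2 leb01) (stepG w), coeFn_stepG v, coeFn_stepG w]
    with t hsub hv hw
  rw [hsub, Pi.sub_apply, hv, hw, Real.norm_eq_abs]
  exact abs_clampedPartialSup_sub_le v w _

end StepFunction

lemma unifIntegrable_of_ae_bound {ι α β : Type*} [MeasurableSpace α] [NormedAddCommGroup β]
    {μ : Measure α} {p : ℝ≥0∞} (hp : 1 ≤ p) (hp' : p ≠ ∞) {f : ι → α → β}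
    (hf : ∀ i, AEStronglyMeasurable (f i) μ) (C : ℝ) (hC : ∀ i, ∀ᵐ x ∂μ, ‖f i x‖ ≤ C) :
    UnifIntegrable f p μ := by
  refine unifIntegrable_of hp hp' hf fun ε _ => ⟨C.toNNReal + 1, fun i => ?_⟩
  have hzero : {x | C.toNNReal + 1 ≤ ‖f i x‖₊}.indicator (f i) =ᵐ[μ] 0 := by
    filter_upwards [hC i] with x hx
    refine indicator_of_notMem (fun hmem => ?_) _
    have : (C.toNNReal : ℝ) + 1 ≤ ‖f i x‖ := by exact_mod_cast hmem
    linarith [C.le_coe_toNNReal]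
  simp [eLpNorm_congr_ae hzero]

lemma tendsto_natFloor_add_one_div {t : ℝ} (ht : 0 ≤ t) :
    Tendsto (fun c : ℝ => ((⌊t * c⌋₊ : ℝ) + 1) / c) atTop (𝓝[>] t) := by
  have hbounds : ∀ᶠ c : ℝ in atTop,
      t < ((⌊t * c⌋₊ : ℝ) + 1) / c ∧ ((⌊t * c⌋₊ : ℝ) + 1) / c ≤ t + c⁻¹ := by
    filter_upwards [eventually_gt_atTop 0] with c hc
    constructor
    · rw [lt_div_iff₀ hc]
      exact Nat.lt_floor_add_one _
    · rw [div_le_iff₀ hc, add_mul, inv_mul_cancel₀ hc.ne']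
      linarith [Nat.floor_le (mul_nonneg ht hc.le)]
  refine tendsto_nhdsWithin_iff.2 ⟨?_, hbounds.mono fun c hc => hc.1⟩
  refine tendsto_of_tendsto_of_tendsto_of_le_of_le' tendsto_const_nhds ?_
    (hbounds.mono fun c hc => hc.1.le) (hbounds.mono fun c hc => hc.2)
  simpa using (tendsto_const_nhds (x := t)).add tendsto_inv_atTop_zero

def gridValues (N : ℕ) (f : G) : Fin (N - 1) → ℝ := fun i => rep f (((i : ℕ) + 1 : ℝ) / N)

lemma gridPoint_mem_Ioo {N : ℕ} (i : Fin (N - 1)) : (((i : ℕ) + 1 : ℝ) / N) ∈ Ioo (0 : ℝ) 1 := by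
  have hlt : ((i : ℕ) + 1 : ℝ) < N := by exact_mod_cast (by omega : (i : ℕ) + 1 < N)
  exact ⟨div_pos (by positivity) (by linarith), (div_lt_one (by linarith)).2 hlt⟩

lemma gridValues_mem (N : ℕ) (f : G) (i : Fin (N - 1)) : gridValues N f i ∈ Icc (0 : ℝ) 1 :=
  (gProp_rep f).2.2 _ (Ioo_subset_Ico_self (gridPoint_mem_Ioo i))

lemma monotone_gridValues (N : ℕ) (f : G) : Monotone (gridValues N f) := fun i j hij =>
  (gProp_rep f).1 (Ioo_subset_Ico_self (gridPoint_mem_Ioo i))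
    (Ioo_subset_Ico_self (gridPoint_mem_Ioo j))
    (div_le_div_of_nonneg_right (by exact_mod_cast Nat.succ_le_succ hij) (Nat.cast_nonneg _))

lemma measurable_gridValues (N : ℕ) : Measurable (gridValues N) :=
  measurable_pi_lambda _ fun i => measurable_rep_apply (gridPoint_mem_Ioo i)

lemma FN_le (N : ℕ) : FN N ≤ (inferInstance : MeasurableSpace G) :=
  (measurable_gridValues N).comap_le

def stepApprox (n : ℕ) (f : G) : G := stepG (gridValues (n + 2) f)

lemma measurable_stepApprox (n : ℕ) : Measurable[FN (n + 2)] (stepApprox n) :=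
  lipschitzWith_stepG.continuous.measurable.comp (comap_measurable _)

lemma tendsto_stepFun_gridValues (f : G) {t : ℝ} (ht : t ∈ Ico (0 : ℝ) 1) :
    Tendsto (fun n : ℕ => stepFun (gridValues (n + 2) f) t) atTop (𝓝 (rep f t)) := by
  set p : ℕ → ℝ := fun n => ((⌊t * ((n : ℝ) + 2)⌋₊ : ℝ) + 1) / ((n : ℝ) + 2)
  have hp : Tendsto p atTop (𝓝[>] t) := (tendsto_natFloor_add_one_div ht.1).comp
    (tendsto_atTop_add_const_right _ 2 tendsto_natCast_atTop_atTop)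
  have hidx : ∀ᶠ n : ℕ in atTop, ⌊t * ((n : ℝ) + 2)⌋₊ ≤ n := by
    filter_upwards [(hp.mono_right nhdsWithin_le_nhds).eventually (gt_mem_nhds ht.2)] with n hn
    rw [div_lt_one (by positivity)] at hn
    exact Nat.lt_succ_iff.1 (by exact_mod_cast (by linarith : (⌊t * ((n : ℝ) + 2)⌋₊ : ℝ) < n + 1))
  refine (((gProp_rep f).2.1 t ht).tendsto.comp
    (hp.mono_right (nhdsWithin_mono _ Ioi_subset_Ici_self))).congr' ?_
  filter_upwards [hidx] with n hn
  rw [Function.comp_apply, stepFun,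
    clampedPartialSup_eq_of_monotone (monotone_gridValues _ f) (gridValues_mem (n + 2) f)]
  simp [gridValues, Fin.clamp, min_eq_left hn, p]

lemma memLp_rep (f : G) : MemLp (rep f) 2 leb01 := (Lp.memLp _).ae_eq (coeFn_ae_eq_rep f)

lemma tendsto_stepApprox (f : G) : Tendsto (fun n => stepApprox n f) atTop (𝓝 f) := by
  have hbound (n : ℕ) : ∀ᵐ t ∂leb01, ‖stepFun (gridValues (n + 2) f) t‖ ≤ 1 :=
    ae_of_all _ fun t => by
      have := stepFun_mem (gridValues (n + 2) f) t
      rw [Real.norm_eq_abs, abs_le]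
      exact ⟨by linarith [this.1], this.2⟩
  have hL2 : Tendsto (fun n => eLpNorm (stepFun (gridValues (n + 2) f) - rep f) 2 leb01)
      atTop (𝓝 0) :=
    tendsto_Lp_finite_of_tendsto_ae one_le_two (by norm_num)
      (fun n => (monotone_stepFun _).measurable.aestronglyMeasurable) (memLp_rep f)
      (unifIntegrable_of_ae_bound one_le_two (by norm_num)
        (fun n => (monotone_stepFun _).measurable.aestronglyMeasurable) 1 hbound)
      (ae_mem_Ico_leb01.mono fun t ht => tendsto_stepFun_gridValues f ht)
  rw [tendsto_subtype_rng, tendsto_iff_dist_tendsto_zero]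
  refine ((ENNReal.tendsto_toReal zero_ne_top).comp hL2).congr fun n => ?_
  rw [Function.comp_apply, Lp.dist_def]
  exact congrArg ENNReal.toReal (eLpNorm_congr_ae ((coeFn_stepG _).sub (coeFn_ae_eq_rep f))).symm

section CondExp

variable {α : Type*} {m m0 : MeasurableSpace α} {μ : Measure α} {p : ℝ≥0∞}

lemma eLpNorm_condExp_sub_le_two_mul (hm : m ≤ m0) [SigmaFinite (μ.trim hm)] (hp : 1 ≤ p)
    {u w : α → ℝ} (hu : Integrable u μ) (hw : Integrable w μ) (hwm : StronglyMeasurable[m] w) :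
    eLpNorm (μ[u|m] - u) p μ ≤ 2 * eLpNorm (u - w) p μ := by
  have hdecomp : μ[u|m] - u =ᵐ[μ] μ[u - w|m] + (w - u) := by
    filter_upwards [condExp_sub hu hw m] with x hx
    simp only [Pi.add_apply, Pi.sub_apply, hx, condExp_of_stronglyMeasurable hm hwm hw]
    ring
  calc eLpNorm (μ[u|m] - u) p μ ≤ eLpNorm (μ[u - w|m]) p μ + eLpNorm (w - u) p μ :=
        (eLpNorm_congr_ae hdecomp).trans_le (eLpNorm_add_le
          (stronglyMeasurable_condExp.mono hm).aestronglyMeasurable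
          (hw.sub hu).aestronglyMeasurable hp)
    _ ≤ eLpNorm (u - w) p μ + eLpNorm (u - w) p μ := by
        rw [eLpNorm_sub_comm w u]
        gcongr
        exact eLpNorm_condExp_le_eLpNorm _ hp
    _ = 2 * eLpNorm (u - w) p μ := (two_mul _).symm

theorem tendsto_eLpNorm_condExp_sub_of_approx {m : ℕ → MeasurableSpace α} (hm : ∀ n, m n ≤ m0)
    [IsFiniteMeasure μ] (hp : 1 ≤ p) {u : α → ℝ} (hu : Integrable u μ)
    (happrox : ∀ ε > 0, ∃ w : ℕ → α → ℝ, (∀ n, StronglyMeasurable[m n] (w n)) ∧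
      (∀ n, Integrable (w n) μ) ∧ ∀ᶠ n in atTop, eLpNorm (u - w n) p μ ≤ ε) :
    Tendsto (fun n => eLpNorm (μ[u|m n] - u) p μ) atTop (𝓝 0) := by
  refine ENNReal.tendsto_atTop_zero.2 fun ε hε => ?_
  obtain ⟨w, hwm, hwi, hclose⟩ := happrox (ε / 2) (ENNReal.half_pos hε.ne')
  obtain ⟨N, hN⟩ := eventually_atTop.1 hclose
  refine ⟨N, fun n hn => ?_⟩
  calc eLpNorm (μ[u|m n] - u) p μ ≤ 2 * eLpNorm (u - w n) p μ :=
        eLpNorm_condExp_sub_le_two_mul (hm n) hp hu (hwi n) (hwm n)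
    _ ≤ 2 * (ε / 2) := by gcongr; exact hN n hn
    _ = ε := ENNReal.mul_div_cancel two_ne_zero ofNat_ne_top

end CondExp

lemma tendsto_eLpNorm_comp_stepApprox_sub (Q : Measure G) [IsFiniteMeasure Q]
    (v : BoundedContinuousFunction G ℝ) :
    Tendsto (fun n => eLpNorm (v ∘ stepApprox n - ⇑v) 2 Q) atTop (𝓝 0) := by
  have hvae (n : ℕ) : AEStronglyMeasurable (v ∘ stepApprox n) Q :=
    ((v.continuous.measurable.comp (measurable_stepApprox n)).mono (FN_le _)
      le_rfl).aestronglyMeasurable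
  exact tendsto_Lp_finite_of_tendsto_ae one_le_two (by norm_num) hvae
    (v.memLp_top.mono_exponent le_top)
    (unifIntegrable_of_ae_bound one_le_two (by norm_num) hvae ‖v‖
      fun n => ae_of_all _ fun f => v.norm_coe_le_norm _)
    (ae_of_all _ fun f => (v.continuous.tendsto f).comp (tendsto_stepApprox f))

theorem condexp_eval_sigma_algebras_L2_convergence_general
    (Q : Measure G) [IsProbabilityMeasure Q]
    (u : G → ℝ) (hu : MemLp u 2 Q) :
    Tendsto (fun N => eLpNorm (Q[u|FN N] - u) 2 Q) atTop (𝓝 0) := by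
  rw [← tendsto_add_atTop_iff_nat 2]
  refine tendsto_eLpNorm_condExp_sub_of_approx (fun n => FN_le (n + 2)) one_le_two
    (hu.integrable one_le_two) fun ε hε => ?_
  obtain ⟨v, huv, hv⟩ :=
    hu.exists_boundedContinuous_eLpNorm_sub_le (by norm_num) (ENNReal.half_pos hε.ne').ne'
  have hvm (n : ℕ) : StronglyMeasurable[FN (n + 2)] (v ∘ stepApprox n) :=
    (v.continuous.measurable.comp (measurable_stepApprox n)).stronglyMeasurable
  have hvae (n : ℕ) : AEStronglyMeasurable (v ∘ stepApprox n) Q :=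
    ((hvm n).mono (FN_le _)).aestronglyMeasurable
  refine ⟨fun n => v ∘ stepApprox n, hvm,
    fun n => Integrable.of_bound (hvae n) ‖v‖ (ae_of_all _ fun f => v.norm_coe_le_norm _), ?_⟩
  filter_upwards [(tendsto_eLpNorm_comp_stepApprox_sub Q v).eventually
    (Iic_mem_nhds (ENNReal.half_pos hε.ne'))] with n hn
  calc eLpNorm (u - v ∘ stepApprox n) 2 Q
        = eLpNorm ((u - ⇑v) - (v ∘ stepApprox n - ⇑v)) 2 Q := by rw [sub_sub_sub_cancel_right]
    _ ≤ eLpNorm (u - ⇑v) 2 Q + eLpNorm (v ∘ stepApprox n - ⇑v) 2 Q :=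
        eLpNorm_sub_le (hu.sub hv).aestronglyMeasurable ((hvae n).sub hv.1) one_le_two
    _ ≤ ε / 2 + ε / 2 := add_le_add huv hn
    _ = ε := ENNReal.add_halves ε

/-- If `Q` is a Borel probability measure on `𝒢` such that for each `t ∈ (0,1)`
`Q`-a.e. `g` is continuous at `t`, then `E[u | ℱ^N] → u` in `L²(𝒢, Q)` for every
`u ∈ L²(𝒢, Q)`. -/
theorem condexp_eval_sigma_algebras_L2_convergence
    (Q : Measure G) [IsProbabilityMeasure Q]
    (hQ : ∀ t ∈ Ioo (0:ℝ) 1, ∀ᵐ f ∂Q, ContinuousWithinAt (rep f) (Ico (0:ℝ) 1) t)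
    (u : G → ℝ) (hu : MemLp u 2 Q) :
    Tendsto (fun N => eLpNorm (Q[u|FN N] - u) 2 Q) atTop (𝓝 0) :=
  condexp_eval_sigma_algebras_L2_convergence_general Q u hu
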